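/- arXiv:2104.02013 — 5 statements merged into one kernel-verified Lean document; each statement's English description precedes it below -/
import Mathlib

section
/- Let (X, P_X), (Y, P_Y), (Z, P_Z) be finite metric measure spaces equipped with m-pointed partitions, and suppose μ_X, μ_Y, and μ_Z are fully supported. Then the quantized Gromov–Wasserstein distance satisfies the triangle inequality: d_qGW((X,P_X),(Z,P_Z)) ≤ d_qGW((X,P_X),(Y,P_Y)) + d_qGW((Y,P_Y),(Z,P_Z)). -/
open Finset

noncomputable section

/-- A probability vector on a finite type. -/
def IsProb {X : Type*} [Fintype X] (μ : X → ℝ) : Prop :=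
  (∀ x, 0 ≤ μ x) ∧ (∑ x, μ x) = 1

/-- `μ` is a coupling of the probability vectors `μX` and `μY`. -/
def IsCoupling {X Y : Type*} [Fintype X] [Fintype Y]
    (μX : X → ℝ) (μY : Y → ℝ) (μ : X → Y → ℝ) : Prop :=
  (∀ x y, 0 ≤ μ x y) ∧ (∀ x, (∑ y, μ x y) = μX x) ∧ (∀ y, (∑ x, μ x y) = μY y)

/-- The Gromov–Wasserstein loss of a coupling, for given distance functions. -/
def GWLoss {X Y : Type*} [Fintype X] [Fintype Y]
    (dX : X → X → ℝ) (dY : Y → Y → ℝ) (μ : X → Y → ℝ) : ℝ :=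
  ∑ x, ∑ y, ∑ x', ∑ y', (dX x x' - dY y y') ^ 2 * μ x y * μ x' y'

/-- The Gromov–Wasserstein distance between two finite mm-spaces. -/
def dGW {X Y : Type*} [Fintype X] [Fintype Y]
    (dX : X → X → ℝ) (dY : Y → Y → ℝ) (μX : X → ℝ) (μY : Y → ℝ) : ℝ :=
  sInf {r : ℝ | ∃ μ, IsCoupling μX μY μ ∧ r = Real.sqrt (GWLoss dX dY μ)}

/-- An `m`-pointed partition of `X`: each point is assigned to one of `m` blocks
(`part`), and each block `p` has a distinguished representative `rep p` lying in it.
Blocks are the fibers of `part`; they are disjoint, cover `X`, and are nonempty. -/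
structure PointedPartition (X : Type*) (m : ℕ) where
  part : X → Fin m
  rep : Fin m → X
  part_rep : ∀ p, part (rep p) = p

/-- The mass `μ_X(Uᵖ)` of the block `Uᵖ`; as a function of `p` this is the measure
`μ_{P_X}` of the quantized representation `Xᵐ` (identified with `Fin m`). -/
def blockMass {X : Type*} [Fintype X] (μX : X → ℝ) {m : ℕ}
    (P : PointedPartition X m) (p : Fin m) : ℝ :=
  ∑ x, if P.part x = p then μX x else 0

/-- The normalized measure `μ_{Uᵖ} = μ_X|_{Uᵖ} / μ_X(Uᵖ)` of a block, extended by zero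
to all of `X` (this is `μ̄_{Uᵖ}`). -/
def blockMeasure {X : Type*} [Fintype X] (μX : X → ℝ) {m : ℕ}
    (P : PointedPartition X m) (p : Fin m) (x : X) : ℝ :=
  if P.part x = p then μX x / blockMass μX P p else 0

/-- `μ` is a quantization coupling: `μ(x,y) = Σ_{p,q} μm(xᵖ,y^q) μ̄_{xᵖ,y^q}(x,y)` where
`μm` couples the quantized measures and each `ν p q` is (the extension by zero of) a
coupling of the block measures with `ν p q (xᵖ, y^q) > 0`. -/
def IsQuantCoupling {X Y : Type*} [Fintype X] [Fintype Y] {m : ℕ}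
    (μX : X → ℝ) (μY : Y → ℝ)
    (PX : PointedPartition X m) (PY : PointedPartition Y m)
    (μ : X → Y → ℝ) : Prop :=
  ∃ (μm : Fin m → Fin m → ℝ) (ν : Fin m → Fin m → X → Y → ℝ),
    IsCoupling (blockMass μX PX) (blockMass μY PY) μm ∧
    (∀ p q, IsCoupling (blockMeasure μX PX p) (blockMeasure μY PY q) (ν p q)) ∧
    (∀ p q, 0 < ν p q (PX.rep p) (PY.rep q)) ∧
    (∀ x y, μ x y = ∑ p, ∑ q, μm p q * ν p q x y)

/-- The quantized Gromov–Wasserstein distance between `m`-pointed mm-spaces. -/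
def dqGW {X Y : Type*} [Fintype X] [Fintype Y] {m : ℕ}
    (dX : X → X → ℝ) (dY : Y → Y → ℝ) (μX : X → ℝ) (μY : Y → ℝ)
    (PX : PointedPartition X m) (PY : PointedPartition Y m) : ℝ :=
  sInf {r : ℝ | ∃ μ, IsQuantCoupling μX μY PX PY μ ∧ r = Real.sqrt (GWLoss dX dY μ)}

/-- The quantized eccentricity `q(P_X) = (Σ_p μ_X(Uᵖ) s_{Uᵖ}(xᵖ)²)^{1/2}`, where
`s_{Uᵖ}(xᵖ)² = Σ_{x ∈ Uᵖ} d_X(xᵖ,x)² μ_{Uᵖ}(x)`. -/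
def qEcc {X : Type*} [Fintype X] (dX : X → X → ℝ) (μX : X → ℝ) {m : ℕ}
    (P : PointedPartition X m) : ℝ :=
  Real.sqrt (∑ p, blockMass μX P p * ∑ x, dX (P.rep p) x ^ 2 * blockMeasure μX P p x)

/-- The `m`-quantized eccentricity `q_m(X)`: minimum of `q(P_X)` over `m`-pointed
partitions. -/
def qEccMin (X : Type*) [Fintype X] (dX : X → X → ℝ) (μX : X → ℝ) (m : ℕ) : ℝ :=
  sInf {r : ℝ | ∃ P : PointedPartition X m, r = qEcc dX μX P}

end

/-! Glue a quantization coupling `μ₁` of `(X, Y)` to one `μ₂` of `(Y, Z)` through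
`π(x, y, z) = μ₁(x, y) μ₂(y, z) / μ_Y(y)`. Its `XY` and `YZ` marginals are `μ₁` and `μ₂`, and its
`XZ` marginal is again a quantization coupling: its block `(p, r)` is the normalized mixture over
`q` of the glued block couplings, each of which is positive at the representatives. The GW losses
of the three marginals are the squared `L²(π ⊗ π)` norms of `d_X - d_Y`, `d_Y - d_Z` and
`d_X - d_Z`, so Minkowski's inequality bounds the `XZ` loss; taking infima gives the claim. -/

section GWLoss

variable {A B C : Type*} [Fintype A] [Fintype B] [Fintype C]

theorem sqrt_sum_add_sq_mul_le {ι : Type*} [Fintype ι] {w : ι → ℝ} (hw : ∀ i, 0 ≤ w i)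
    (f g : ι → ℝ) :
    √(∑ i, (f i + g i) ^ 2 * w i) ≤ √(∑ i, f i ^ 2 * w i) + √(∑ i, g i ^ 2 * w i) := by
  let v (h : ι → ℝ) : EuclideanSpace ℝ ι := WithLp.toLp 2 fun i => h i * √(w i)
  have norm_v (h : ι → ℝ) : ‖v h‖ = √(∑ i, h i ^ 2 * w i) := by
    simp [v, EuclideanSpace.norm_eq, mul_pow, Real.sq_sqrt (hw _)]
  have v_add : v (fun i => f i + g i) = v f + v g := by
    ext i; simp [v, add_mul]
  simpa only [← norm_v, v_add] using norm_add_le (v f) (v g)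

theorem sum_mul_eq_sum_mul_sum_fiberwise {T : Type*} [Fintype T] [DecidableEq A] [DecidableEq B]
    (f : T → A) (g : T → B) (π : T → ℝ) (H : A → B → ℝ) :
    ∑ t, H (f t) (g t) * π t = ∑ a, ∑ b, H a b * ∑ t with f t = a ∧ g t = b, π t := by
  rw [← Finset.sum_fiberwise univ f]
  refine Finset.sum_congr rfl fun a _ => ?_
  rw [← Finset.sum_fiberwise _ g]
  refine Finset.sum_congr rfl fun b _ => ?_
  rw [Finset.filter_filter, Finset.mul_sum]
  refine Finset.sum_congr rfl fun t ht => ?_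
  obtain ⟨rfl, rfl⟩ := (Finset.mem_filter.1 ht).2
  rfl

theorem GWLoss_pushforward {T : Type*} [Fintype T] [DecidableEq A] [DecidableEq B]
    (dA : A → A → ℝ) (dB : B → B → ℝ) (f : T → A) (g : T → B) (π : T → ℝ) :
    GWLoss dA dB (fun a b => ∑ t with f t = a ∧ g t = b, π t) =
      ∑ t, ∑ t', (dA (f t) (f t') - dB (g t) (g t')) ^ 2 * π t * π t' := by
  set μ := fun a b => ∑ t with f t = a ∧ g t = b, π t
  have inner (a : A) (b : B) : ∑ t', (dA a (f t') - dB b (g t')) ^ 2 * π t' =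
      ∑ a', ∑ b', (dA a a' - dB b b') ^ 2 * μ a' b' :=
    sum_mul_eq_sum_mul_sum_fiberwise f g π fun a' b' => (dA a a' - dB b b') ^ 2
  calc GWLoss dA dB μ
      = ∑ a, ∑ b, (∑ a', ∑ b', (dA a a' - dB b b') ^ 2 * μ a' b') * μ a b := by
        simp only [GWLoss, Finset.sum_mul]
        exact Finset.sum_congr rfl fun a _ => Finset.sum_congr rfl fun b _ =>
          Finset.sum_congr rfl fun a' _ => Finset.sum_congr rfl fun b' _ => by ring
    _ = ∑ t, (∑ t', (dA (f t) (f t') - dB (g t) (g t')) ^ 2 * π t') * π t := by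
        simp only [inner]
        exact (sum_mul_eq_sum_mul_sum_fiberwise f g π _).symm
    _ = _ := by
        simp only [Finset.sum_mul]
        exact Finset.sum_congr rfl fun t _ => Finset.sum_congr rfl fun t' _ => by ring

theorem sqrt_GWLoss_le_of_triple (dA : A → A → ℝ) (dB : B → B → ℝ) (dC : C → C → ℝ)
    {π : A × B × C → ℝ} (hπ : ∀ t, 0 ≤ π t) :
    √(GWLoss dA dC (fun a c => ∑ b, π (a, b, c))) ≤
      √(GWLoss dA dB (fun a b => ∑ c, π (a, b, c))) +
        √(GWLoss dB dC (fun b c => ∑ a, π (a, b, c))) := by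
  classical
  have hAB : (fun a b => ∑ c, π (a, b, c)) = fun a b => ∑ t with t.1 = a ∧ t.2.1 = b, π t := by
    ext a b
    rw [Finset.sum_filter, Fintype.sum_prod_type, Finset.sum_eq_single a (by simp_all) (by simp),
      Fintype.sum_prod_type, Finset.sum_eq_single b (by simp_all) (by simp)]
    simp
  have hAC : (fun a c => ∑ b, π (a, b, c)) = fun a c => ∑ t with t.1 = a ∧ t.2.2 = c, π t := by
    ext a c
    simp [Finset.sum_filter, Fintype.sum_prod_type, ite_and]
  have hBC : (fun b c => ∑ a, π (a, b, c)) = fun b c => ∑ t with t.2.1 = b ∧ t.2.2 = c, π t := by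
    ext b c
    simp [Finset.sum_filter, Fintype.sum_prod_type, ite_and]
  rw [hAB, hAC, hBC, GWLoss_pushforward, GWLoss_pushforward, GWLoss_pushforward]
  simp only [← Fintype.sum_prod_type', mul_assoc]
  simpa only [sub_add_sub_cancel] using
    sqrt_sum_add_sq_mul_le (fun u : (A × B × C) × (A × B × C) => mul_nonneg (hπ u.1) (hπ u.2))
      (fun u => dA u.1.1 u.2.1 - dB u.1.2.1 u.2.2.1)
      (fun u => dB u.1.2.1 u.2.2.1 - dC u.1.2.2 u.2.2.2)

end GWLoss

noncomputable def gluing {A B C : Type*} [Fintype B] (μB : B → ℝ) (μ₁ : A → B → ℝ) (μ₂ : B → C → ℝ)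
    (a : A) (c : C) : ℝ :=
  ∑ b, μ₁ a b * μ₂ b c / μB b

theorem isCoupling_mul {A B : Type*} [Fintype A] [Fintype B] {f : A → ℝ} {g : B → ℝ}
    (hf : ∀ a, 0 ≤ f a) (hg : ∀ b, 0 ≤ g b) (hf₁ : ∑ a, f a = 1) (hg₁ : ∑ b, g b = 1) :
    IsCoupling f g fun a b => f a * g b :=
  ⟨fun a b => mul_nonneg (hf a) (hg b), fun a => by rw [← Finset.mul_sum, hg₁, mul_one],
    fun b => by rw [← Finset.sum_mul, hf₁, one_mul]⟩

namespace IsCoupling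

variable {A B C : Type*} [Fintype A] [Fintype B] [Fintype C]
  {μA : A → ℝ} {μB : B → ℝ} {μC : C → ℝ} {μ : A → B → ℝ} {μ₁ : A → B → ℝ} {μ₂ : B → C → ℝ}

theorem nonneg_right (h : IsCoupling μA μB μ) (b : B) : 0 ≤ μB b :=
  h.2.2 b ▸ Finset.sum_nonneg fun a _ => h.1 a b

theorem eq_zero_of_right_eq_zero (h : IsCoupling μA μB μ) {b : B} (hb : μB b = 0) (a : A) :
    μ a b = 0 :=
  (Finset.sum_eq_zero_iff_of_nonneg fun a _ => h.1 a b).1 (by rw [h.2.2 b, hb]) a (mem_univ a)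

theorem eq_zero_of_left_eq_zero (h : IsCoupling μA μB μ) {a : A} (ha : μA a = 0) (b : B) :
    μ a b = 0 :=
  (Finset.sum_eq_zero_iff_of_nonneg fun b _ => h.1 a b).1 (by rw [h.2.1 a, ha]) b (mem_univ b)

theorem sum_mul_div_right (h₁ : IsCoupling μA μB μ₁) (h₂ : IsCoupling μB μC μ₂) (a : A) (b : B) :
    ∑ c, μ₁ a b * μ₂ b c / μB b = μ₁ a b := by
  by_cases hb : μB b = 0
  · simp [h₁.eq_zero_of_right_eq_zero hb]
  · rw [← Finset.sum_div, ← Finset.mul_sum, h₂.2.1 b, mul_div_assoc, div_self hb, mul_one]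

theorem sum_mul_div_left (h₁ : IsCoupling μA μB μ₁) (h₂ : IsCoupling μB μC μ₂) (b : B) (c : C) :
    ∑ a, μ₁ a b * μ₂ b c / μB b = μ₂ b c := by
  by_cases hb : μB b = 0
  · simp [h₂.eq_zero_of_left_eq_zero hb]
  · rw [← Finset.sum_div, ← Finset.sum_mul, h₁.2.2 b, mul_div_cancel_left₀ _ hb]

theorem gluing (h₁ : IsCoupling μA μB μ₁) (h₂ : IsCoupling μB μC μ₂) :
    IsCoupling μA μC (gluing μB μ₁ μ₂) := by
  refine ⟨fun a c => Finset.sum_nonneg fun b _ =>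
    div_nonneg (mul_nonneg (h₁.1 a b) (h₂.1 b c)) (h₁.nonneg_right b), fun a => ?_, fun c => ?_⟩
  · simp only [_root_.gluing]
    rw [Finset.sum_comm]
    simp only [h₁.sum_mul_div_right h₂, h₁.2.1]
  · simp only [_root_.gluing]
    rw [Finset.sum_comm]
    simp only [h₁.sum_mul_div_left h₂, h₂.2.2]

theorem gluing_pos (h₁ : IsCoupling μA μB μ₁) (h₂ : IsCoupling μB μC μ₂) {a : A} {b : B} {c : C}
    (hb : 0 < μB b) (hab : 0 < μ₁ a b) (hbc : 0 < μ₂ b c) : 0 < _root_.gluing μB μ₁ μ₂ a c :=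
  Finset.sum_pos' (fun b' _ => div_nonneg (mul_nonneg (h₁.1 a b') (h₂.1 b' c)) (h₁.nonneg_right b'))
    ⟨b, mem_univ b, div_pos (mul_pos hab hbc) hb⟩

theorem sqrt_GWLoss_gluing_le (h₁ : IsCoupling μA μB μ₁) (h₂ : IsCoupling μB μC μ₂)
    (dA : A → A → ℝ) (dB : B → B → ℝ) (dC : C → C → ℝ) :
    √(GWLoss dA dC (_root_.gluing μB μ₁ μ₂)) ≤ √(GWLoss dA dB μ₁) + √(GWLoss dB dC μ₂) := by
  have := sqrt_GWLoss_le_of_triple dA dB dC (π := fun t => μ₁ t.1 t.2.1 * μ₂ t.2.1 t.2.2 / μB t.2.1)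
    fun t => div_nonneg (mul_nonneg (h₁.1 _ _) (h₂.1 _ _)) (h₁.nonneg_right _)
  simp only [h₁.sum_mul_div_right h₂, h₁.sum_mul_div_left h₂] at this
  exact this

-- The fallback `ν₀` covers vanishing total weight: a quantization coupling must be positive at
-- the representatives even on blocks of zero mass.
theorem exists_mul_sum_eq_sum_mul {Q : Type*} [Fintype Q] {w : Q → ℝ} {ν : Q → A → B → ℝ}
    {ν₀ : A → B → ℝ} (hw : ∀ q, 0 ≤ w q) (hν : ∀ q, IsCoupling μA μB (ν q))
    (hν₀ : IsCoupling μA μB ν₀) {a : A} {b : B} (hpos : ∀ q, 0 < ν q a b) (hpos₀ : 0 < ν₀ a b) :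
    ∃ ν' : A → B → ℝ, IsCoupling μA μB ν' ∧ 0 < ν' a b ∧
      ∀ x y, (∑ q, w q) * ν' x y = ∑ q, w q * ν q x y := by
  by_cases hW : ∑ q, w q = 0
  · have hw0 : ∀ q, w q = 0 := fun q =>
      (Finset.sum_eq_zero_iff_of_nonneg fun q _ => hw q).1 hW q (mem_univ q)
    exact ⟨ν₀, hν₀, hpos₀, fun x y => by simp [hw0]⟩
  obtain ⟨q, -, hq⟩ := Finset.exists_ne_zero_of_sum_ne_zero hW
  have hW_pos : 0 < ∑ q, w q := lt_of_le_of_ne (Finset.sum_nonneg fun q _ => hw q) (Ne.symm hW)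
  refine ⟨fun x y => (∑ q, w q * ν q x y) / ∑ q, w q, ⟨fun x y => ?_, fun x => ?_, fun y => ?_⟩,
    ?_, fun x y => mul_div_cancel₀ _ hW⟩
  · exact div_nonneg (Finset.sum_nonneg fun q _ => mul_nonneg (hw q) ((hν q).1 x y)) hW_pos.le
  · rw [← Finset.sum_div, Finset.sum_comm]
    simp only [← Finset.mul_sum, (hν _).2.1, ← Finset.sum_mul]
    exact mul_div_cancel_left₀ _ hW
  · rw [← Finset.sum_div, Finset.sum_comm]
    simp only [← Finset.mul_sum, (hν _).2.2, ← Finset.sum_mul]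
    exact mul_div_cancel_left₀ _ hW
  · exact div_pos (Finset.sum_pos' (fun q _ => mul_nonneg (hw q) ((hν q).1 a b))
      ⟨q, mem_univ q, mul_pos (lt_of_le_of_ne (hw q) (Ne.symm hq)) (hpos q)⟩) hW_pos

theorem sum_sum_mul {I J : Type*} [Fintype I] [Fintype J] {α : I → ℝ} {β : J → ℝ}
    {μA : I → A → ℝ} {μB : J → B → ℝ} {μm : I → J → ℝ} {ν : I → J → A → B → ℝ}
    (hμm : IsCoupling α β μm) (hν : ∀ i j, IsCoupling (μA i) (μB j) (ν i j)) :
    IsCoupling (fun a => ∑ i, α i * μA i a) (fun b => ∑ j, β j * μB j b)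
      (fun a b => ∑ i, ∑ j, μm i j * ν i j a b) := by
  refine ⟨fun a b => Finset.sum_nonneg fun i _ => Finset.sum_nonneg fun j _ =>
    mul_nonneg (hμm.1 i j) ((hν i j).1 a b), fun a => ?_, fun b => ?_⟩
  · rw [Finset.sum_comm]
    simp only [Finset.sum_comm (s := univ (α := B)), ← Finset.mul_sum, (hν _ _).2.1,
      ← Finset.sum_mul, hμm.2.1]
  · rw [Finset.sum_comm]
    simp only [Finset.sum_comm (s := univ (α := A)), ← Finset.mul_sum, (hν _ _).2.2]
    rw [Finset.sum_comm]
    simp only [← Finset.sum_mul, hμm.2.2]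

end IsCoupling

section Blocks

variable {X : Type*} [Fintype X] {μX : X → ℝ} {m : ℕ} (P : PointedPartition X m)

theorem blockMass_pos (hμ : ∀ x, 0 < μX x) (p : Fin m) : 0 < blockMass μX P p :=
  Finset.sum_pos' (fun x _ => by split_ifs <;> simp [(hμ x).le])
    ⟨P.rep p, mem_univ _, by simp [P.part_rep, hμ]⟩

theorem blockMeasure_of_part_ne {p : Fin m} {x : X} (hx : P.part x ≠ p) :
    blockMeasure μX P p x = 0 :=
  if_neg hx

theorem blockMeasure_nonneg (hμ : ∀ x, 0 < μX x) (p : Fin m) (x : X) :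
    0 ≤ blockMeasure μX P p x := by
  unfold blockMeasure
  split_ifs
  exacts [div_nonneg (hμ x).le (blockMass_pos P hμ p).le, le_rfl]

theorem blockMeasure_rep_pos (hμ : ∀ x, 0 < μX x) (p : Fin m) :
    0 < blockMeasure μX P p (P.rep p) := by
  rw [blockMeasure, if_pos (P.part_rep p)]
  exact div_pos (hμ _) (blockMass_pos P hμ p)

theorem sum_blockMeasure (hμ : ∀ x, 0 < μX x) (p : Fin m) : ∑ x, blockMeasure μX P p x = 1 := by
  have eq_div (x : X) :
      blockMeasure μX P p x = (if P.part x = p then μX x else 0) / blockMass μX P p := by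
    rw [ite_div, zero_div, blockMeasure]
  rw [Finset.sum_congr rfl fun x _ => eq_div x, ← Finset.sum_div]
  exact div_self (blockMass_pos P hμ p).ne'

theorem sum_blockMass (hμ : IsProb μX) : ∑ p, blockMass μX P p = 1 := by
  simp only [blockMass]
  rw [Finset.sum_comm]
  simpa using hμ.2

theorem sum_blockMass_mul_blockMeasure (hμ : ∀ x, 0 < μX x) (x : X) :
    ∑ p, blockMass μX P p * blockMeasure μX P p x = μX x := by
  rw [Finset.sum_eq_single (P.part x) (fun p _ hp => by rw [blockMeasure_of_part_ne P hp.symm,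
    mul_zero]) (by simp), blockMeasure, if_pos rfl, mul_div_cancel₀ _ (blockMass_pos P hμ _).ne']

end Blocks

theorem gluing_eq_sum_gluing {X Y Z I J K : Type*} [Fintype Y] [Fintype I] [Fintype J]
    [Fintype K] {μY : Y → ℝ} (block : Y → J) {μ₁ : X → Y → ℝ} {μ₂ : Y → Z → ℝ}
    {μm₁ : I → J → ℝ} {μm₂ : J → K → ℝ} {ν₁ : I → J → X → Y → ℝ} {ν₂ : J → K → Y → Z → ℝ}
    (hν₁ : ∀ i j x y, block y ≠ j → ν₁ i j x y = 0) (hν₂ : ∀ j k y z, block y ≠ j → ν₂ j k y z = 0)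
    (hμ₁ : ∀ x y, μ₁ x y = ∑ i, ∑ j, μm₁ i j * ν₁ i j x y)
    (hμ₂ : ∀ y z, μ₂ y z = ∑ j, ∑ k, μm₂ j k * ν₂ j k y z) (x : X) (z : Z) :
    gluing μY μ₁ μ₂ x z = ∑ i, ∑ k, ∑ j, μm₁ i j * μm₂ j k * gluing μY (ν₁ i j) (ν₂ j k) x z := by
  have hμ₁' (y : Y) : μ₁ x y = ∑ i, μm₁ i (block y) * ν₁ i (block y) x y := by
    refine (hμ₁ x y).trans (Finset.sum_congr rfl fun i _ => ?_)
    exact Finset.sum_eq_single _ (fun j _ hj => by rw [hν₁ i j x y (Ne.symm hj), mul_zero])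
      (by simp)
  have hμ₂' (y : Y) : μ₂ y z = ∑ k, μm₂ (block y) k * ν₂ (block y) k y z := by
    refine (hμ₂ y z).trans (Finset.sum_eq_single _ (fun j _ hj => ?_) (by simp))
    exact Finset.sum_eq_zero fun k _ => by rw [hν₂ j k y z (Ne.symm hj), mul_zero]
  set T : I → J → K → Y → ℝ := fun i j k y => μm₁ i j * μm₂ j k * (ν₁ i j x y * ν₂ j k y z / μY y)
  have hT (i : I) (k : K) (y : Y) : ∑ j, T i j k y = T i (block y) k y :=
    Finset.sum_eq_single _ (fun j _ hj => by simp [T, hν₁ i j x y (Ne.symm hj)]) (by simp)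
  calc gluing μY μ₁ μ₂ x z = ∑ y, ∑ i, ∑ k, T i (block y) k y := by
        refine Finset.sum_congr rfl fun y _ => ?_
        rw [hμ₁', hμ₂', Finset.sum_mul_sum, Finset.sum_div]
        exact Finset.sum_congr rfl fun i _ => by
          rw [Finset.sum_div]; exact Finset.sum_congr rfl fun k _ => by ring
    _ = ∑ y, ∑ i, ∑ k, ∑ j, T i j k y := by simp only [hT]
    _ = ∑ i, ∑ k, ∑ j, ∑ y, T i j k y := by
        rw [Finset.sum_comm]
        refine Finset.sum_congr rfl fun i _ => ?_
        rw [Finset.sum_comm]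
        refine Finset.sum_congr rfl fun k _ => Finset.sum_comm
    _ = _ := by simp only [T, gluing, Finset.mul_sum]

theorem gluing_blockMeasure {X Y Z : Type*} [Fintype Y] {m : ℕ} {μY : Y → ℝ}
    {PY : PointedPartition Y m} (hμY : ∀ y, 0 < μY y) {q : Fin m} {ν₁ : X → Y → ℝ}
    (hν₁ : ∀ x y, PY.part y ≠ q → ν₁ x y = 0) (ν₂ : Y → Z → ℝ) (x : X) (z : Z) :
    gluing (blockMeasure μY PY q) ν₁ ν₂ x z = blockMass μY PY q * gluing μY ν₁ ν₂ x z := by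
  simp only [gluing, Finset.mul_sum]
  refine Finset.sum_congr rfl fun y _ => ?_
  by_cases hy : PY.part y = q
  · rw [blockMeasure, if_pos hy]
    field_simp [(blockMass_pos PY hμY q).ne', (hμY y).ne']
  · simp [hν₁ x y hy]

section Quantization

variable {X Y Z : Type*} [Fintype X] [Fintype Y] [Fintype Z] {m : ℕ}
  {μX : X → ℝ} {μY : Y → ℝ} {μZ : Z → ℝ}
  {PX : PointedPartition X m} {PY : PointedPartition Y m} {PZ : PointedPartition Z m}

theorem IsQuantCoupling.isCoupling (hμX : ∀ x, 0 < μX x) (hμY : ∀ y, 0 < μY y)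
    {μ : X → Y → ℝ} (h : IsQuantCoupling μX μY PX PY μ) : IsCoupling μX μY μ := by
  obtain ⟨μm, ν, hμm, hν, -, hμ⟩ := h
  have := hμm.sum_sum_mul hν
  simp only [sum_blockMass_mul_blockMeasure _ hμX, sum_blockMass_mul_blockMeasure _ hμY,
    ← hμ] at this
  exact this

theorem isCoupling_blockMeasure_mul (hμX : ∀ x, 0 < μX x) (hμY : ∀ y, 0 < μY y)
    (p q : Fin m) :
    IsCoupling (blockMeasure μX PX p) (blockMeasure μY PY q)
      fun x y => blockMeasure μX PX p x * blockMeasure μY PY q y :=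
  isCoupling_mul (blockMeasure_nonneg PX hμX p) (blockMeasure_nonneg PY hμY q)
    (sum_blockMeasure PX hμX p) (sum_blockMeasure PY hμY q)

theorem exists_isQuantCoupling (hμX : IsProb μX) (hμY : IsProb μY) (hμX_pos : ∀ x, 0 < μX x)
    (hμY_pos : ∀ y, 0 < μY y) (PX : PointedPartition X m) (PY : PointedPartition Y m) :
    ∃ μ, IsQuantCoupling μX μY PX PY μ :=
  ⟨_, _, fun p q x y => blockMeasure μX PX p x * blockMeasure μY PY q y,
    isCoupling_mul (fun p => (blockMass_pos PX hμX_pos p).le)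
      (fun q => (blockMass_pos PY hμY_pos q).le) (sum_blockMass PX hμX) (sum_blockMass PY hμY),
    isCoupling_blockMeasure_mul hμX_pos hμY_pos,
    fun p q => mul_pos (blockMeasure_rep_pos PX hμX_pos p) (blockMeasure_rep_pos PY hμY_pos q),
    fun _ _ => rfl⟩

theorem IsQuantCoupling.gluing (hμX : ∀ x, 0 < μX x) (hμY : ∀ y, 0 < μY y) (hμZ : ∀ z, 0 < μZ z)
    {μ₁ : X → Y → ℝ} {μ₂ : Y → Z → ℝ} (h₁ : IsQuantCoupling μX μY PX PY μ₁)
    (h₂ : IsQuantCoupling μY μZ PY PZ μ₂) : IsQuantCoupling μX μZ PX PZ (gluing μY μ₁ μ₂) := by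
  obtain ⟨μm₁, ν₁, hμm₁, hν₁, hpos₁, hμ₁⟩ := h₁
  obtain ⟨μm₂, ν₂, hμm₂, hν₂, hpos₂, hμ₂⟩ := h₂
  have hν₁_block (p q x y) (hy : PY.part y ≠ q) : ν₁ p q x y = 0 :=
    (hν₁ p q).eq_zero_of_right_eq_zero (blockMeasure_of_part_ne PY hy) x
  have hν₂_block (q r y z) (hy : PY.part y ≠ q) : ν₂ q r y z = 0 :=
    (hν₂ q r).eq_zero_of_left_eq_zero (blockMeasure_of_part_ne PY hy) z
  set w : Fin m → Fin m → Fin m → ℝ := fun p q r => μm₁ p q * μm₂ q r / blockMass μY PY q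
  set ν : Fin m → Fin m → Fin m → X → Z → ℝ := fun p q r =>
    _root_.gluing (blockMeasure μY PY q) (ν₁ p q) (ν₂ q r)
  have hw (p q r) : 0 ≤ w p q r :=
    div_nonneg (mul_nonneg (hμm₁.1 p q) (hμm₂.1 q r)) (blockMass_pos PY hμY q).le
  have hν (p q r) : IsCoupling (blockMeasure μX PX p) (blockMeasure μZ PZ r) (ν p q r) :=
    (hν₁ p q).gluing (hν₂ q r)
  have hν_pos (p q r) : 0 < ν p q r (PX.rep p) (PZ.rep r) :=
    (hν₁ p q).gluing_pos (hν₂ q r) (blockMeasure_rep_pos PY hμY q) (hpos₁ p q) (hpos₂ q r)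
  choose νm hνm hνm_pos hνm_mul using fun p r =>
    IsCoupling.exists_mul_sum_eq_sum_mul (w := fun q => w p q r) (fun q => hw p q r)
      (fun q => hν p q r) (isCoupling_blockMeasure_mul hμX hμZ p r) (fun q => hν_pos p q r)
      (mul_pos (blockMeasure_rep_pos PX hμX p) (blockMeasure_rep_pos PZ hμZ r))
  refine ⟨_root_.gluing (blockMass μY PY) μm₁ μm₂, νm, hμm₁.gluing hμm₂, hνm, hνm_pos,
    fun x z => ?_⟩
  rw [gluing_eq_sum_gluing PY.part hν₁_block hν₂_block hμ₁ hμ₂]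
  refine Finset.sum_congr rfl fun p _ => Finset.sum_congr rfl fun r _ =>
    (Finset.sum_congr rfl fun q _ => ?_).trans (hνm_mul p r x z).symm
  rw [show ν p q r x z = _ from gluing_blockMeasure hμY (hν₁_block p q) (ν₂ q r) x z]
  simp only [w]
  field_simp [(blockMass_pos PY hμY q).ne']

end Quantization

theorem csInf_le_csInf_add_csInf {α : Type*} [ConditionallyCompleteLattice α] [AddGroup α]
    [AddLeftMono α] [AddRightMono α] {S T U : Set α} (hS : S.Nonempty) (hS' : BddBelow S)
    (hT : T.Nonempty) (hT' : BddBelow T) (h : ∀ s ∈ S, ∀ t ∈ T, sInf U ≤ s + t) :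
    sInf U ≤ sInf S + sInf T := by
  rw [← csInf_add hS hS' hT hT']
  exact le_csInf (hS.add hT) fun _ ⟨s, hs, t, ht, hst⟩ => hst ▸ h s hs t ht

theorem bddBelow_setOf_sqrt {α : Type*} (P : α → Prop) (f : α → ℝ) :
    BddBelow {r | ∃ a, P a ∧ r = √(f a)} :=
  ⟨0, by rintro _ ⟨a, -, rfl⟩; positivity⟩

theorem dqGW_le_sqrt_GWLoss {X Y : Type*} [Fintype X] [Fintype Y] {m : ℕ}
    {dX : X → X → ℝ} {dY : Y → Y → ℝ} {μX : X → ℝ} {μY : Y → ℝ}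
    {PX : PointedPartition X m} {PY : PointedPartition Y m} {μ : X → Y → ℝ}
    (h : IsQuantCoupling μX μY PX PY μ) : dqGW dX dY μX μY PX PY ≤ √(GWLoss dX dY μ) :=
  csInf_le (bddBelow_setOf_sqrt _ _) ⟨μ, h, rfl⟩

/-- quantized GW distance satisfies the triangle inequality
(for fully supported probability measures). -/
theorem dqGW_triangle
    {X Y Z : Type*} [Fintype X] [Fintype Y] [Fintype Z]
    [MetricSpace X] [MetricSpace Y] [MetricSpace Z] {m : ℕ}
    (μX : X → ℝ) (μY : Y → ℝ) (μZ : Z → ℝ)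
    (hμX : IsProb μX) (hμY : IsProb μY) (hμZ : IsProb μZ)
    (hXpos : ∀ x, 0 < μX x) (hYpos : ∀ y, 0 < μY y) (hZpos : ∀ z, 0 < μZ z)
    (PX : PointedPartition X m) (PY : PointedPartition Y m) (PZ : PointedPartition Z m) :
    dqGW (fun x x' => dist x x') (fun z z' => dist z z') μX μZ PX PZ ≤
      dqGW (fun x x' => dist x x') (fun y y' => dist y y') μX μY PX PY +
      dqGW (fun y y' => dist y y') (fun z z' => dist z z') μY μZ PY PZ := by
  obtain ⟨μXY, hμXY⟩ := exists_isQuantCoupling hμX hμY hXpos hYpos PX PY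
  obtain ⟨μYZ, hμYZ⟩ := exists_isQuantCoupling hμY hμZ hYpos hZpos PY PZ
  refine csInf_le_csInf_add_csInf ⟨_, μXY, hμXY, rfl⟩ (bddBelow_setOf_sqrt _ _)
    ⟨_, μYZ, hμYZ, rfl⟩ (bddBelow_setOf_sqrt _ _) ?_
  rintro _ ⟨μ₁, hμ₁, rfl⟩ _ ⟨μ₂, hμ₂, rfl⟩
  calc dqGW (fun x x' => dist x x') (fun z z' => dist z z') μX μZ PX PZ
      ≤ √(GWLoss (fun x x' => dist x x') (fun z z' => dist z z') (gluing μY μ₁ μ₂)) :=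
        dqGW_le_sqrt_GWLoss (hμ₁.gluing hXpos hYpos hZpos hμ₂)
    _ ≤ _ := (hμ₁.isCoupling hXpos hYpos).sqrt_GWLoss_gluing_le (hμ₂.isCoupling hYpos hZpos) _ _ _
end

section
/- Let X, Y, Z be finite metric measure spaces with μ_Y fully supported, and let μ^{XY} ∈ C(μ_X, μ_Y) and μ^{YZ} ∈ C(μ_Y, μ_Z) be couplings. Then the glued measure μ^{XZ}(x,z) := Σ_{y ∈ Y} μ^{XY}(x,y) μ^{YZ}(y,z) / μ_Y(y) is a coupling of μ_X and μ_Z, and the Gromov–Wasserstein losses satisfy GW(μ^{XZ})^{1/2} ≤ GW(μ^{XY})^{1/2} + GW(μ^{YZ})^{1/2}. -/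
/-! Disintegrating both couplings along `Y` gives one measure `π` on `X × Y × Z` whose three
two-dimensional marginals are `μXY`, `μYZ` and the glued coupling. Every GW loss is then the
`π ⊗ π`-average of a squared distortion, and since `dX - dZ = (dX - dY) + (dY - dZ)`, the
triangle inequality is Minkowski's inequality in `L²(π ⊗ π)`. -/

open Finset

theorem Real.sqrt_sum_mul_add_sq_le {ι : Type*} (s : Finset ι) {w : ι → ℝ}
    (hw : ∀ i ∈ s, 0 ≤ w i) (f g : ι → ℝ) :
    √(∑ i ∈ s, w i * (f i + g i) ^ 2) ≤
      √(∑ i ∈ s, w i * f i ^ 2) + √(∑ i ∈ s, w i * g i ^ 2) := by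
  have hsq : ∀ h : ι → ℝ, ∑ i ∈ s, (√(w i) * h i) ^ 2 = ∑ i ∈ s, w i * h i ^ 2 :=
    fun h => sum_congr rfl fun i hi => by rw [mul_pow, Real.sq_sqrt (hw i hi)]
  have cauchy_schwarz : ∑ i ∈ s, w i * (f i * g i) ≤
      √(∑ i ∈ s, w i * f i ^ 2) * √(∑ i ∈ s, w i * g i ^ 2) := by
    rw [← hsq f, ← hsq g]
    refine le_of_eq_of_le (sum_congr rfl fun i hi => ?_)
      (Real.sum_mul_le_sqrt_mul_sqrt s _ _)
    linear_combination (-(f i * g i)) * Real.mul_self_sqrt (hw i hi)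
  have expand : ∑ i ∈ s, w i * (f i + g i) ^ 2 = ∑ i ∈ s, w i * f i ^ 2 +
      2 * ∑ i ∈ s, w i * (f i * g i) + ∑ i ∈ s, w i * g i ^ 2 := by
    rw [mul_sum, ← sum_add_distrib, ← sum_add_distrib]
    exact sum_congr rfl fun i _ => by ring
  have nonneg : ∀ h : ι → ℝ, 0 ≤ ∑ i ∈ s, w i * h i ^ 2 :=
    fun h => sum_nonneg fun i hi => mul_nonneg (hw i hi) (sq_nonneg _)
  rw [Real.sqrt_le_iff, add_sq, Real.sq_sqrt (nonneg f), Real.sq_sqrt (nonneg g), expand]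
  exact ⟨by positivity, by linarith⟩

section Pushforward

variable {T A B C : Type*} [Fintype T] [Fintype A] [Fintype B] [Fintype C]

/-- `μ` is the image of the weights `π` on `T` under `t ↦ (f t, g t)`, stated by testing
against all functions so that no fibres (and no decidable equality) are needed. -/
def IsPushforward (π : T → ℝ) (f : T → A) (g : T → B) (μ : A → B → ℝ) : Prop :=
  ∀ F : A → B → ℝ, ∑ a, ∑ b, F a b * μ a b = ∑ t, F (f t) (g t) * π t

theorem IsPushforward.GWLoss_eq {π : T → ℝ} {f : T → A} {g : T → B} {μ : A → B → ℝ}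
    (h : IsPushforward π f g μ) (dA : A → A → ℝ) (dB : B → B → ℝ) :
    GWLoss dA dB μ = ∑ p : T × T,
      π p.1 * π p.2 * (dA (f p.1) (f p.2) - dB (g p.1) (g p.2)) ^ 2 := by
  calc GWLoss dA dB μ
      = ∑ a, ∑ b, (∑ t', (dA a (f t') - dB b (g t')) ^ 2 * π t') * μ a b := by
        refine sum_congr rfl fun a _ => sum_congr rfl fun b _ => ?_
        rw [sum_mul]
        exact (h fun a' b' => (dA a a' - dB b b') ^ 2 * μ a b).trans
          (sum_congr rfl fun t' _ => by ring)
    _ = _ := by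
        rw [h fun a b => ∑ t', (dA a (f t') - dB b (g t')) ^ 2 * π t', Fintype.sum_prod_type]
        exact sum_congr rfl fun t _ => by rw [sum_mul]; exact sum_congr rfl fun t' _ => by ring

theorem sqrt_GWLoss_le_of_isPushforward {π : T → ℝ} (hπ : ∀ t, 0 ≤ π t)
    {f : T → A} {g : T → B} {h : T → C} {μAB : A → B → ℝ} {μBC : B → C → ℝ}
    {μAC : A → C → ℝ} (hAB : IsPushforward π f g μAB) (hBC : IsPushforward π g h μBC)
    (hAC : IsPushforward π f h μAC) (dA : A → A → ℝ) (dB : B → B → ℝ) (dC : C → C → ℝ) :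
    √(GWLoss dA dC μAC) ≤ √(GWLoss dA dB μAB) + √(GWLoss dB dC μBC) := by
  rw [hAB.GWLoss_eq, hBC.GWLoss_eq, hAC.GWLoss_eq]
  simpa only [sub_add_sub_cancel] using Real.sqrt_sum_mul_add_sq_le univ
    (fun (p : T × T) _ => mul_nonneg (hπ p.1) (hπ p.2))
    (fun (p : T × T) => dA (f p.1) (f p.2) - dB (g p.1) (g p.2))
    (fun (p : T × T) => dB (g p.1) (g p.2) - dC (h p.1) (h p.2))

variable {X Y Z : Type*} [Fintype X] [Fintype Y] [Fintype Z]

theorem isPushforward_of_sum_fst {π : X → Y → Z → ℝ} {μ : Y → Z → ℝ}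
    (h : ∀ y z, ∑ x, π x y z = μ y z) :
    IsPushforward (fun t : X × Y × Z => π t.1 t.2.1 t.2.2) (·.2.1) (·.2.2) μ := by
  intro F
  simp only [← h, Fintype.sum_prod_type, mul_sum]
  exact (sum_comm.trans (sum_congr rfl fun _ _ => sum_comm)).symm

theorem isPushforward_of_sum_snd {π : X → Y → Z → ℝ} {μ : X → Z → ℝ}
    (h : ∀ x z, ∑ y, π x y z = μ x z) :
    IsPushforward (fun t : X × Y × Z => π t.1 t.2.1 t.2.2) (·.1) (·.2.2) μ := by
  intro F
  simp only [← h, Fintype.sum_prod_type, mul_sum]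
  exact sum_congr rfl fun _ _ => sum_comm

theorem isPushforward_of_sum_thd {π : X → Y → Z → ℝ} {μ : X → Y → ℝ}
    (h : ∀ x y, ∑ z, π x y z = μ x y) :
    IsPushforward (fun t : X × Y × Z => π t.1 t.2.1 t.2.2) (·.1) (·.2.1) μ := by
  intro F
  simp only [← h, Fintype.sum_prod_type, mul_sum]

end Pushforward

section Gluing

variable {X Y Z : Type*} [Fintype X] [Fintype Y] [Fintype Z]

namespace IsCoupling

variable {μX : X → ℝ} {μY : Y → ℝ} {μ : X → Y → ℝ}

theorem nonneg_right_s7 (h : IsCoupling μX μY μ) (y : Y) : 0 ≤ μY y :=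
  h.2.2 y ▸ sum_nonneg fun x _ => h.1 x y

theorem eq_zero_of_left_eq_zero_s7 (h : IsCoupling μX μY μ) {x : X} (hx : μX x = 0) (y : Y) :
    μ x y = 0 :=
  (sum_eq_zero_iff_of_nonneg fun y _ => h.1 x y).1 (h.2.1 x ▸ hx) y (mem_univ y)

theorem eq_zero_of_right_eq_zero_s7 (h : IsCoupling μX μY μ) (x : X) {y : Y} (hy : μY y = 0) :
    μ x y = 0 :=
  (sum_eq_zero_iff_of_nonneg fun x _ => h.1 x y).1 (h.2.2 y ▸ hy) x (mem_univ x)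

end IsCoupling

/-- Where `μY y = 0` both couplings vanish on the fibre over `y`, so the junk value
`0 / 0 = 0` is harmless. -/
noncomputable def glue (μY : Y → ℝ) (μXY : X → Y → ℝ) (μYZ : Y → Z → ℝ)
    (x : X) (y : Y) (z : Z) : ℝ :=
  μXY x y * μYZ y z / μY y

variable {μX : X → ℝ} {μY : Y → ℝ} {μZ : Z → ℝ} {μXY : X → Y → ℝ} {μYZ : Y → Z → ℝ}

theorem glue_nonneg (hXY : IsCoupling μX μY μXY) (hYZ : IsCoupling μY μZ μYZ)
    (x : X) (y : Y) (z : Z) : 0 ≤ glue μY μXY μYZ x y z :=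
  div_nonneg (mul_nonneg (hXY.1 x y) (hYZ.1 y z)) (hXY.nonneg_right_s7 y)

theorem sum_glue_right (hXY : IsCoupling μX μY μXY) (hYZ : IsCoupling μY μZ μYZ)
    (x : X) (y : Y) : ∑ z, glue μY μXY μYZ x y z = μXY x y := by
  simp only [glue]
  rw [← sum_div, ← mul_sum, hYZ.2.1 y]
  exact mul_div_cancel_of_imp (hXY.eq_zero_of_right_eq_zero_s7 x)

theorem sum_glue_left (hXY : IsCoupling μX μY μXY) (hYZ : IsCoupling μY μZ μYZ)
    (y : Y) (z : Z) : ∑ x, glue μY μXY μYZ x y z = μYZ y z := by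
  simp only [glue]
  rw [← sum_div, ← sum_mul, hXY.2.2 y]
  exact mul_div_cancel_left_of_imp fun hy => hYZ.eq_zero_of_left_eq_zero_s7 hy z

theorem isCoupling_sum_glue (hXY : IsCoupling μX μY μXY) (hYZ : IsCoupling μY μZ μYZ) :
    IsCoupling μX μZ fun x z => ∑ y, glue μY μXY μYZ x y z := by
  refine ⟨fun x z => sum_nonneg fun y _ => glue_nonneg hXY hYZ x y z, fun x => ?_, fun z => ?_⟩
  · rw [sum_comm]
    simp only [sum_glue_right hXY hYZ, hXY.2.1 x]
  · rw [sum_comm]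
    simp only [sum_glue_left hXY hYZ, hYZ.2.2 z]

end Gluing

theorem glued_coupling_and_sqrt_GWLoss_triangle_general
    {X Y Z : Type*} [Fintype X] [Fintype Y] [Fintype Z]
    [MetricSpace X] [MetricSpace Y] [MetricSpace Z]
    (μX : X → ℝ) (μY : Y → ℝ) (μZ : Z → ℝ)
    (μXY : X → Y → ℝ) (μYZ : Y → Z → ℝ)
    (hXY : IsCoupling μX μY μXY) (hYZ : IsCoupling μY μZ μYZ) :
    IsCoupling μX μZ (fun x z => ∑ y, μXY x y * μYZ y z / μY y) ∧
    Real.sqrt (GWLoss (fun x x' => dist x x') (fun z z' => dist z z')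
        (fun x z => ∑ y, μXY x y * μYZ y z / μY y)) ≤
      Real.sqrt (GWLoss (fun x x' => dist x x') (fun y y' => dist y y') μXY) +
      Real.sqrt (GWLoss (fun y y' => dist y y') (fun z z' => dist z z') μYZ) := by
  exact ⟨isCoupling_sum_glue hXY hYZ, sqrt_GWLoss_le_of_isPushforward
    (fun t : X × Y × Z => glue_nonneg hXY hYZ t.1 t.2.1 t.2.2)
    (isPushforward_of_sum_thd (sum_glue_right hXY hYZ))
    (isPushforward_of_sum_fst (sum_glue_left hXY hYZ))
    (isPushforward_of_sum_snd fun _ _ => rfl) _ _ _⟩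

/-- the glued measure is a coupling and square-root GW loss is
subadditive under gluing. -/
theorem glued_coupling_and_sqrt_GWLoss_triangle
    {X Y Z : Type*} [Fintype X] [Fintype Y] [Fintype Z]
    [MetricSpace X] [MetricSpace Y] [MetricSpace Z]
    (μX : X → ℝ) (μY : Y → ℝ) (μZ : Z → ℝ)
    (hμX : IsProb μX) (hμY : IsProb μY) (hμZ : IsProb μZ)
    (hYpos : ∀ y, 0 < μY y)
    (μXY : X → Y → ℝ) (μYZ : Y → Z → ℝ)
    (hXY : IsCoupling μX μY μXY) (hYZ : IsCoupling μY μZ μYZ) :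
    IsCoupling μX μZ (fun x z => ∑ y, μXY x y * μYZ y z / μY y) ∧
    Real.sqrt (GWLoss (fun x x' => dist x x') (fun z z' => dist z z')
        (fun x z => ∑ y, μXY x y * μYZ y z / μY y)) ≤
      Real.sqrt (GWLoss (fun x x' => dist x x') (fun y y' => dist y y') μXY) +
      Real.sqrt (GWLoss (fun y y' => dist y y') (fun z z' => dist z z') μYZ) :=
  glued_coupling_and_sqrt_GWLoss_triangle_general μX μY μZ μXY μYZ hXY hYZ
end

section
/- Let X be a finite metric measure space and P_X an m-pointed partition of X with quantized representation Xᵐ. Then the Gromov–Wasserstein distance between X and its quantized representation is bounded by twice the quantized eccentricity: d_GW(X, Xᵐ) ≤ 2 q(P_X). -/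
open Finset

/-!
Couple `X` with its quantized representation along the projection `x ↦ x^{p(x)}` onto the
representative of its block. By the triangle inequality the distortion of a pair `(x, x')` is at
most `d(x^{p(x)}, x) + d(x^{p(x')}, x')`, so `(a + b)² ≤ 2a² + 2b²` bounds the GW loss of this
coupling by `4 Σₓ d(x^{p(x)}, x)² μ_X(x)`, which is exactly `4 q(P_X)²`.
-/

section Coupling

variable {X Y : Type*} [Fintype X] [Fintype Y]

theorem dGW_le_sqrt_GWLoss {dX : X → X → ℝ} {dY : Y → Y → ℝ} {μX : X → ℝ} {μY : Y → ℝ}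
    {μ : X → Y → ℝ} (hμ : IsCoupling μX μY μ) :
    dGW dX dY μX μY ≤ Real.sqrt (GWLoss dX dY μ) :=
  csInf_le ⟨0, by rintro r ⟨ν, -, rfl⟩; exact Real.sqrt_nonneg _⟩ ⟨μ, hμ, rfl⟩

variable [DecidableEq Y]

noncomputable def graphCoupling (μX : X → ℝ) (π : X → Y) (x : X) (y : Y) : ℝ :=
  if π x = y then μX x else 0

theorem isCoupling_graphCoupling {μX : X → ℝ} (hμX : ∀ x, 0 ≤ μX x) (π : X → Y) :
    IsCoupling μX (fun y => ∑ x, if π x = y then μX x else 0) (graphCoupling μX π) := by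
  refine ⟨fun x y => ?_, fun x => by simp [graphCoupling], fun y => rfl⟩
  unfold graphCoupling
  split_ifs
  exacts [hμX x, le_rfl]

theorem GWLoss_graphCoupling (dX : X → X → ℝ) (dY : Y → Y → ℝ) (μX : X → ℝ) (π : X → Y) :
    GWLoss dX dY (graphCoupling μX π) =
      ∑ x, ∑ x', (dX x x' - dY (π x) (π x')) ^ 2 * μX x * μX x' := by
  unfold GWLoss graphCoupling
  refine sum_congr rfl fun x _ => ?_
  rw [sum_comm]
  simp [mul_ite, ite_mul, sum_ite_eq]

end Coupling

theorem sum_sum_add_mul_mul_of_isProb {X : Type*} [Fintype X] {w : X → ℝ} (hw : IsProb w)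
    (f : X → ℝ) :
    ∑ x, ∑ x', (f x + f x') * w x * w x' = 2 * ∑ x, f x * w x := by
  have hsplit : ∀ x x', (f x + f x') * w x * w x' = f x * w x * w x' + w x * (f x' * w x') :=
    fun _ _ => by ring
  simp only [hsplit, sum_add_distrib, ← mul_sum, ← sum_mul, hw.2]
  ring

theorem sq_dist_sub_dist_le {X : Type*} [PseudoMetricSpace X] (x x' a a' : X) :
    (dist x x' - dist a a') ^ 2 ≤ 2 * dist a x ^ 2 + 2 * dist a' x' ^ 2 := by
  have h := dist_dist_dist_le x x' a a'
  rw [Real.dist_eq, dist_comm x a, dist_comm x' a'] at h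
  have habs : (dist x x' - dist a a') ^ 2 ≤ (dist a x + dist a' x') ^ 2 := by
    rw [← sq_abs]
    gcongr
  nlinarith [sq_nonneg (dist a x - dist a' x')]

theorem GWLoss_graphCoupling_le {X Y : Type*} [Fintype X] [Fintype Y] [DecidableEq Y]
    [PseudoMetricSpace X] {μX : X → ℝ} (hμX : IsProb μX) (π : X → Y) (r : Y → X) :
    GWLoss (fun x x' => dist x x') (fun p q => dist (r p) (r q)) (graphCoupling μX π) ≤
      4 * ∑ x, dist (r (π x)) x ^ 2 * μX x := by
  rw [GWLoss_graphCoupling]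
  calc _ ≤ ∑ x, ∑ x',
        (2 * dist (r (π x)) x ^ 2 + 2 * dist (r (π x')) x' ^ 2) * μX x * μX x' := by
        refine sum_le_sum fun x _ => sum_le_sum fun x' _ => ?_
        have := sq_dist_sub_dist_le x x' (r (π x)) (r (π x'))
        gcongr
        all_goals exact hμX.1 _
    _ = 4 * ∑ x, dist (r (π x)) x ^ 2 * μX x := by
        rw [sum_sum_add_mul_mul_of_isProb hμX]
        simp only [mul_assoc, ← mul_sum]
        ring

section Partition

variable {X : Type*} [Fintype X] {m : ℕ}

theorem blockMass_mul_blockMeasure {μX : X → ℝ} (hμX : ∀ x, 0 ≤ μX x)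
    (P : PointedPartition X m) (p : Fin m) (x : X) :
    blockMass μX P p * blockMeasure μX P p x = if P.part x = p then μX x else 0 := by
  unfold blockMeasure
  split_ifs with hx
  · by_cases hmass : blockMass μX P p = 0
    · -- `blockMeasure` divides by zero here, but a null block has only null points
      have hx0 : μX x = 0 := by
        have := (sum_eq_zero_iff_of_nonneg fun x' _ => ?_).mp hmass x (mem_univ x)
        · simpa [hx] using this
        · split_ifs
          exacts [hμX x', le_rfl]
      simp [hx0, hmass]
    · field_simp
  · rw [mul_zero]

theorem sum_blockMass_mul_sum_blockMeasure {μX : X → ℝ} (hμX : ∀ x, 0 ≤ μX x)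
    (P : PointedPartition X m) (f : Fin m → X → ℝ) :
    ∑ p, blockMass μX P p * ∑ x, f p x * blockMeasure μX P p x =
      ∑ x, f (P.part x) x * μX x := by
  simp only [mul_sum, mul_left_comm (blockMass μX P _), blockMass_mul_blockMeasure hμX,
    mul_ite, mul_zero]
  rw [sum_comm]
  simp

end Partition

/-- `d_GW(X, Xᵐ) ≤ 2 q(P_X)`. -/
theorem dGW_quantized_representation_le_two_qEcc
    {X : Type*} [Fintype X] [MetricSpace X] {m : ℕ}
    (μX : X → ℝ) (hμX : IsProb μX) (P : PointedPartition X m) :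
    dGW (fun x x' => dist x x') (fun p q => dist (P.rep p) (P.rep q))
        μX (blockMass μX P) ≤
      2 * qEcc (fun x x' => dist x x') μX P := by
  calc _ ≤ Real.sqrt (GWLoss (fun x x' => dist x x') (fun p q => dist (P.rep p) (P.rep q))
          (graphCoupling μX P.part)) :=
        dGW_le_sqrt_GWLoss (isCoupling_graphCoupling hμX.1 P.part)
    _ ≤ Real.sqrt (2 ^ 2 * ∑ x, dist (P.rep (P.part x)) x ^ 2 * μX x) := by
        gcongr
        norm_num [GWLoss_graphCoupling_le hμX]
    _ = 2 * qEcc (fun x x' => dist x x') μX P := by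
        rw [qEcc, sum_blockMass_mul_sum_blockMeasure hμX.1 P, Real.sqrt_mul (by norm_num),
          Real.sqrt_sq zero_le_two]
end

section
/- Let X and Y be finite metric measure spaces with m-pointed partitions P_X and P_Y and quantized representations Xᵐ and Yᵐ. Then |d_GW(X, Y) − d_GW(Xᵐ, Yᵐ)| ≤ 2(q(P_X) + q(P_Y)). -/
open Finset

/-!
Write `σ = rep ∘ part` on either side. For a coupling `μ`, `√GW(μ)` is the `L²(μ ⊗ μ)` norm of
`Γ(x, y, x', y') = d(x, x') - d(y, y')`, and the pushforward of `μ` along the partitions is a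
coupling of the quantized spaces whose loss is the same norm of `Γ ∘ σ`. Pointwise
`|Γ - Γ ∘ σ| ≤ d(σx, x) + d(σx', x') + d(σy, y) + d(σy', y')`, and since the marginals of `μ` are
`μ_X` and `μ_Y`, each of these four terms has `L²` norm `q(P_X)` or `q(P_Y)`. So the losses of `μ`
and of its pushforward differ by at most `2 (q(P_X) + q(P_Y))`. Conversely every coupling `ν` of the
quantized measures is such a pushforward: spread `ν(p, q)` over `Uᵖ × U^q` proportionally to
`μ_X ⊗ μ_Y`. The two infima therefore differ by at most the same amount.
-/

noncomputable def weightedL2Norm {ι : Type*} [Fintype ι] (w f : ι → ℝ) : ℝ :=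
  √(∑ i, w i * f i ^ 2)

section WeightedL2Norm

variable {ι : Type*} [Fintype ι] {w : ι → ℝ}

theorem weightedL2Norm_eq_norm (hw : ∀ i, 0 ≤ w i) (f : ι → ℝ) :
    weightedL2Norm w f = ‖(WithLp.toLp 2 fun i => √(w i) * f i : EuclideanSpace ℝ ι)‖ := by
  rw [EuclideanSpace.norm_eq, weightedL2Norm]
  congr 1
  refine sum_congr rfl fun i _ => ?_
  simp [mul_pow, Real.sq_sqrt (hw i)]

theorem weightedL2Norm_add_le (hw : ∀ i, 0 ≤ w i) (f g : ι → ℝ) :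
    weightedL2Norm w (fun i => f i + g i) ≤ weightedL2Norm w f + weightedL2Norm w g := by
  simp only [weightedL2Norm_eq_norm hw, mul_add]
  rw [← Pi.add_def, WithLp.toLp_add]
  exact norm_add_le _ _

theorem abs_weightedL2Norm_sub_le (hw : ∀ i, 0 ≤ w i) (f g : ι → ℝ) :
    |weightedL2Norm w f - weightedL2Norm w g| ≤ weightedL2Norm w (fun i => f i - g i) := by
  simp only [weightedL2Norm_eq_norm hw, mul_sub]
  rw [← Pi.sub_def, WithLp.toLp_sub]
  exact abs_norm_sub_norm_le _ _

theorem weightedL2Norm_le_of_abs_le (hw : ∀ i, 0 ≤ w i) {f g : ι → ℝ} (h : ∀ i, |f i| ≤ g i) :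
    weightedL2Norm w f ≤ weightedL2Norm w g :=
  Real.sqrt_le_sqrt <| sum_le_sum fun i _ =>
    mul_le_mul_of_nonneg_left (sq_le_sq' (abs_le.mp (h i)).1 (abs_le.mp (h i)).2) (hw i)

theorem weightedL2Norm_prod_fst {κ : Type*} [Fintype κ] {v : κ → ℝ} (hv : ∑ j, v j = 1)
    (f : ι → ℝ) :
    weightedL2Norm (fun i : ι × κ => w i.1 * v i.2) (fun i => f i.1) = weightedL2Norm w f := by
  simp only [weightedL2Norm, Fintype.sum_prod_type]
  congr 1
  refine sum_congr rfl fun i _ => ?_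
  rw [← mul_one (w i * f i ^ 2), ← hv, mul_sum]
  exact sum_congr rfl fun j _ => by ring

theorem weightedL2Norm_prod_snd {κ : Type*} [Fintype κ] {v : κ → ℝ} (hv : ∑ j, v j = 1)
    (f : ι → ℝ) :
    weightedL2Norm (fun i : κ × ι => v i.1 * w i.2) (fun i => f i.2) = weightedL2Norm w f := by
  simp only [weightedL2Norm, Fintype.sum_prod_type]
  rw [sum_comm]
  congr 1
  refine sum_congr rfl fun i _ => ?_
  rw [← mul_one (w i * f i ^ 2), ← hv, mul_sum]
  exact sum_congr rfl fun j _ => by ring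

end WeightedL2Norm

section Coupling

variable {X Y : Type*} [Fintype X] [Fintype Y] {μX : X → ℝ} {μY : Y → ℝ} {μ : X → Y → ℝ}

theorem IsCoupling.left_nonneg (hμ : IsCoupling μX μY μ) (x : X) : 0 ≤ μX x :=
  hμ.2.1 x ▸ sum_nonneg fun y _ => hμ.1 x y

theorem IsCoupling.right_nonneg (hμ : IsCoupling μX μY μ) (y : Y) : 0 ≤ μY y :=
  hμ.2.2 y ▸ sum_nonneg fun x _ => hμ.1 x y

theorem IsCoupling.sum_uncurry (hμ : IsCoupling μX μY μ) :
    ∑ z : X × Y, μ z.1 z.2 = ∑ x, μX x := by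
  rw [Fintype.sum_prod_type]
  exact sum_congr rfl fun x _ => hμ.2.1 x

theorem IsCoupling.weightedL2Norm_fst (hμ : IsCoupling μX μY μ) (f : X → ℝ) :
    weightedL2Norm (fun z : X × Y => μ z.1 z.2) (fun z => f z.1) = weightedL2Norm μX f := by
  simp only [weightedL2Norm, Fintype.sum_prod_type]
  congr 1
  refine sum_congr rfl fun x _ => ?_
  rw [← hμ.2.1 x, sum_mul]

theorem IsCoupling.weightedL2Norm_snd (hμ : IsCoupling μX μY μ) (f : Y → ℝ) :
    weightedL2Norm (fun z : X × Y => μ z.1 z.2) (fun z => f z.2) = weightedL2Norm μY f := by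
  simp only [weightedL2Norm, Fintype.sum_prod_type]
  rw [sum_comm]
  congr 1
  refine sum_congr rfl fun y _ => ?_
  rw [← hμ.2.2 y, sum_mul]

theorem IsCoupling.eq_zero_of_left_eq_zero_s13 (hμ : IsCoupling μX μY μ) {x : X} (hx : μX x = 0)
    (y : Y) : μ x y = 0 :=
  le_antisymm (hx ▸ hμ.2.1 x ▸ single_le_sum (fun y' _ => hμ.1 x y') (mem_univ y)) (hμ.1 x y)

theorem IsCoupling.eq_zero_of_right_eq_zero_s13 (hμ : IsCoupling μX μY μ) {y : Y} (hy : μY y = 0)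
    (x : X) : μ x y = 0 :=
  le_antisymm (hy ▸ hμ.2.2 y ▸ single_le_sum (fun x' _ => hμ.1 x' y) (mem_univ x)) (hμ.1 x y)

theorem IsCoupling.div_left_mul (hμ : IsCoupling μX μY μ) (x : X) (y : Y) :
    μ x y / μX x * μX x = μ x y := by
  rcases eq_or_ne (μX x) 0 with hx | hx
  · simp [hμ.eq_zero_of_left_eq_zero_s13 hx y]
  · exact div_mul_cancel₀ _ hx

theorem IsCoupling.div_right_mul (hμ : IsCoupling μX μY μ) (x : X) (y : Y) :
    μ x y / μY y * μY y = μ x y := by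
  rcases eq_or_ne (μY y) 0 with hy | hy
  · simp [hμ.eq_zero_of_right_eq_zero_s13 hy x]
  · exact div_mul_cancel₀ _ hy

theorem isCoupling_mul_s13 (hμX : IsProb μX) (hμY : IsProb μY) :
    IsCoupling μX μY (fun x y => μX x * μY y) :=
  ⟨fun x y => mul_nonneg (hμX.1 x) (hμY.1 y), fun x => by rw [← mul_sum, hμY.2, mul_one],
    fun y => by rw [← sum_mul, hμX.2, one_mul]⟩

end Coupling

theorem sqrt_GWLoss_eq_weightedL2Norm {X Y : Type*} [Fintype X] [Fintype Y]
    (dX : X → X → ℝ) (dY : Y → Y → ℝ) (μ : X → Y → ℝ) :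
    √(GWLoss dX dY μ) = weightedL2Norm (fun i : (X × Y) × (X × Y) => μ i.1.1 i.1.2 * μ i.2.1 i.2.2)
      (fun i => dX i.1.1 i.2.1 - dY i.1.2 i.2.2) := by
  simp only [GWLoss, weightedL2Norm, Fintype.sum_prod_type]
  congr 1
  refine sum_congr rfl fun x _ => sum_congr rfl fun y _ =>
    sum_congr rfl fun x' _ => sum_congr rfl fun y' _ => by ring

theorem abs_sqrt_GWLoss_sub_sqrt_GWLoss_comp_le {X Y : Type*} [Fintype X] [Fintype Y]
    [PseudoMetricSpace X] [PseudoMetricSpace Y] {μX : X → ℝ} {μY : Y → ℝ} {μ : X → Y → ℝ}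
    (hμ : IsCoupling μX μY μ) (hμX : ∑ x, μX x = 1) (σ : X → X) (τ : Y → Y) :
    |√(GWLoss (fun x x' => dist x x') (fun y y' => dist y y') μ) -
        √(GWLoss (fun x x' => dist (σ x) (σ x')) (fun y y' => dist (τ y) (τ y')) μ)| ≤
      2 * (weightedL2Norm μX (fun x => dist (σ x) x) +
        weightedL2Norm μY (fun y => dist (τ y) y)) := by
  set ν : X × Y → ℝ := fun z => μ z.1 z.2
  set eX : X × Y → ℝ := fun z => dist (σ z.1) z.1
  set eY : X × Y → ℝ := fun z => dist (τ z.2) z.2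
  have hν : ∑ z, ν z = 1 := hμ.sum_uncurry.trans hμX
  have hw : ∀ i : (X × Y) × (X × Y), 0 ≤ ν i.1 * ν i.2 := fun i =>
    mul_nonneg (hμ.1 _ _) (hμ.1 _ _)
  have hX₁ := (weightedL2Norm_prod_fst hν eX).trans (hμ.weightedL2Norm_fst fun x => dist (σ x) x)
  have hX₂ := (weightedL2Norm_prod_snd hν eX).trans (hμ.weightedL2Norm_fst fun x => dist (σ x) x)
  have hY₁ := (weightedL2Norm_prod_fst hν eY).trans (hμ.weightedL2Norm_snd fun y => dist (τ y) y)
  have hY₂ := (weightedL2Norm_prod_snd hν eY).trans (hμ.weightedL2Norm_snd fun y => dist (τ y) y)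
  have hpt : ∀ i : (X × Y) × (X × Y),
      |(dist i.1.1 i.2.1 - dist i.1.2 i.2.2) -
          (dist (σ i.1.1) (σ i.2.1) - dist (τ i.1.2) (τ i.2.2))| ≤
        eX i.1 + eX i.2 + eY i.1 + eY i.2 := by
    rintro ⟨⟨x, y⟩, ⟨x', y'⟩⟩
    have hX := dist_dist_dist_le (σ x) (σ x') x x'
    have hY := dist_dist_dist_le (τ y) (τ y') y y'
    rw [Real.dist_eq, abs_le] at hX hY
    rw [abs_le]
    constructor <;> linarith
  rw [sqrt_GWLoss_eq_weightedL2Norm, sqrt_GWLoss_eq_weightedL2Norm]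
  have htri := weightedL2Norm_add_le hw
  calc _ ≤ _ := abs_weightedL2Norm_sub_le hw _ _
    _ ≤ weightedL2Norm _ (fun i => eX i.1 + eX i.2 + eY i.1 + eY i.2) :=
      weightedL2Norm_le_of_abs_le hw hpt
    _ ≤ _ := by
      linarith [htri (fun i => eX i.1 + eX i.2 + eY i.1) (fun i => eY i.2),
        htri (fun i => eX i.1 + eX i.2) (fun i => eY i.1), htri (fun i => eX i.1) (fun i => eX i.2),
        hX₁, hX₂, hY₁, hY₂]

section Pushforward

variable {X Y A B : Type*} [Fintype X] [Fintype Y] [DecidableEq A] [DecidableEq B]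

def pushMass (f : X → A) (μ : X → ℝ) (a : A) : ℝ :=
  ∑ x, if f x = a then μ x else 0

def pushCoupling (f : X → A) (g : Y → B) (μ : X → Y → ℝ) (a : A) (b : B) : ℝ :=
  ∑ x, ∑ y, if f x = a ∧ g y = b then μ x y else 0

theorem sum_mul_pushMass [Fintype A] (f : X → A) (μ : X → ℝ) (h : A → ℝ) :
    ∑ a, h a * pushMass f μ a = ∑ x, h (f x) * μ x := by
  simp only [pushMass, mul_sum, mul_ite, mul_zero]
  rw [sum_comm]
  simp

theorem sum_mul_pushCoupling [Fintype A] [Fintype B] (f : X → A) (g : Y → B) (μ : X → Y → ℝ)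
    (h : A → B → ℝ) :
    ∑ a, ∑ b, h a b * pushCoupling f g μ a b = ∑ x, ∑ y, h (f x) (g y) * μ x y := by
  simp only [pushCoupling, mul_sum, mul_ite, mul_zero]
  rw [sum_comm]
  simp_rw [sum_comm (s := (univ : Finset A))]
  rw [sum_comm]
  simp_rw [sum_comm (s := (univ : Finset B)), ite_and]
  simp

theorem GWLoss_pushCoupling [Fintype A] [Fintype B] (f : X → A) (g : Y → B)
    (dA : A → A → ℝ) (dB : B → B → ℝ) (μ : X → Y → ℝ) :
    GWLoss dA dB (pushCoupling f g μ) =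
      GWLoss (fun x x' => dA (f x) (f x')) (fun y y' => dB (g y) (g y')) μ := by
  have inner : ∀ a b, ∑ a', ∑ b', (dA a a' - dB b b') ^ 2 * pushCoupling f g μ a' b' =
      ∑ x', ∑ y', (dA a (f x') - dB b (g y')) ^ 2 * μ x' y' := fun a b =>
    sum_mul_pushCoupling f g μ _
  calc GWLoss dA dB (pushCoupling f g μ)
      = ∑ a, ∑ b, (∑ a', ∑ b', (dA a a' - dB b b') ^ 2 * pushCoupling f g μ a' b') *
          pushCoupling f g μ a b := by
        simp only [GWLoss, sum_mul, mul_right_comm]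
    _ = _ := by
        simp only [inner, sum_mul_pushCoupling f g μ
          (fun a b => ∑ x', ∑ y', (dA a (f x') - dB b (g y')) ^ 2 * μ x' y')]
        simp only [GWLoss, sum_mul, mul_right_comm]

theorem IsCoupling.pushCoupling [Fintype A] [Fintype B] {μX : X → ℝ} {μY : Y → ℝ} {μ : X → Y → ℝ}
    (hμ : IsCoupling μX μY μ) (f : X → A) (g : Y → B) :
    IsCoupling (pushMass f μX) (pushMass g μY) (pushCoupling f g μ) := by
  refine ⟨fun a b => sum_nonneg fun x _ => sum_nonneg fun y _ => ?_, fun a => ?_, fun b => ?_⟩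
  · split_ifs
    exacts [hμ.1 x y, le_rfl]
  · simp only [_root_.pushCoupling, pushMass, ← hμ.2.1]
    rw [sum_comm]
    refine sum_congr rfl fun x _ => ?_
    rw [sum_comm]
    split_ifs with hx <;> simp [hx]
  · simp only [_root_.pushCoupling, pushMass, ← hμ.2.2]
    rw [sum_comm]
    simp_rw [sum_comm (γ := A), ite_and, sum_ite_eq, mem_univ, if_true]
    rw [sum_comm]
    simp

theorem le_pushMass {μ : X → ℝ} (hμ : ∀ x, 0 ≤ μ x) (f : X → A) (x : X) :
    μ x ≤ pushMass f μ (f x) := by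
  simpa [pushMass] using single_le_sum (f := fun x' => if f x' = f x then μ x' else 0)
    (fun x' _ => by split_ifs; exacts [hμ x', le_rfl]) (mem_univ x)

theorem div_pushMass_mul_pushMass {μ : X → ℝ} (hμ : ∀ x, 0 ≤ μ x) (f : X → A) (x : X) :
    μ x / pushMass f μ (f x) * pushMass f μ (f x) = μ x := by
  rcases eq_or_ne (pushMass f μ (f x)) 0 with h | h
  · simp [h, le_antisymm (h ▸ le_pushMass hμ f x) (hμ x)]
  · exact div_mul_cancel₀ _ h

end Pushforward

section Pullback

variable {X Y A B : Type*} [Fintype X] [Fintype Y] [Fintype A] [Fintype B]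
  [DecidableEq A] [DecidableEq B] {μX : X → ℝ} {μY : Y → ℝ}

-- On a block of mass zero the division returns `0`; `ν` vanishes there too
-- (`IsCoupling.div_left_mul`), so nothing is lost.
noncomputable def pullCoupling (f : X → A) (g : Y → B) (μX : X → ℝ) (μY : Y → ℝ)
    (ν : A → B → ℝ) (x : X) (y : Y) : ℝ :=
  ν (f x) (g y) * (μX x / pushMass f μX (f x)) * (μY y / pushMass g μY (g y))

theorem IsCoupling.pullCoupling (hμX : ∀ x, 0 ≤ μX x) (hμY : ∀ y, 0 ≤ μY y) {f : X → A} {g : Y → B} {ν : A → B → ℝ}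
    (hν : IsCoupling (pushMass f μX) (pushMass g μY) ν) :
    IsCoupling μX μY (pullCoupling f g μX μY ν) := by
  refine ⟨fun x y => ?_, fun x => ?_, fun y => ?_⟩
  · exact mul_nonneg (mul_nonneg (hν.1 _ _)
      (div_nonneg (hμX x) ((le_pushMass hμX f x).trans' (hμX x))))
      (div_nonneg (hμY y) ((le_pushMass hμY g y).trans' (hμY y)))
  · calc ∑ y, _root_.pullCoupling f g μX μY ν x y
        = (∑ y, ν (f x) (g y) / pushMass g μY (g y) * μY y) * (μX x / pushMass f μX (f x)) := by
          rw [sum_mul]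
          exact sum_congr rfl fun y _ => by unfold _root_.pullCoupling; ring
      _ = (∑ b, ν (f x) b / pushMass g μY b * pushMass g μY b) *
            (μX x / pushMass f μX (f x)) := by
          rw [sum_mul_pushMass g μY fun b => ν (f x) b / pushMass g μY b]
      _ = μX x := by
          simp only [hν.div_right_mul, hν.2.1]
          rw [mul_comm, div_pushMass_mul_pushMass hμX]
  · calc ∑ x, _root_.pullCoupling f g μX μY ν x y
        = (∑ x, ν (f x) (g y) / pushMass f μX (f x) * μX x) * (μY y / pushMass g μY (g y)) := by
          rw [sum_mul]
          exact sum_congr rfl fun x _ => by unfold _root_.pullCoupling; ring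
      _ = (∑ a, ν a (g y) / pushMass f μX a * pushMass f μX a) *
            (μY y / pushMass g μY (g y)) := by
          rw [sum_mul_pushMass f μX fun a => ν a (g y) / pushMass f μX a]
      _ = μY y := by
          simp only [hν.div_left_mul, hν.2.2]
          rw [mul_comm, div_pushMass_mul_pushMass hμY]

theorem pushCoupling_pullCoupling {f : X → A} {g : Y → B} {ν : A → B → ℝ}
    (hν : IsCoupling (pushMass f μX) (pushMass g μY) ν) :
    pushCoupling f g (pullCoupling f g μX μY ν) = ν := by
  ext a b
  calc pushCoupling f g (pullCoupling f g μX μY ν) a b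
      = ∑ x, ∑ y, (if f x = a then μX x else 0) / pushMass f μX a *
          ((if g y = b then μY y else 0) / pushMass g μY b) * ν a b := by
        refine sum_congr rfl fun x _ => sum_congr rfl fun y _ => ?_
        unfold pullCoupling
        by_cases hx : f x = a
        · by_cases hy : g y = b
          · simp only [hx, hy, and_self, if_true]
            ring
          · simp [hy]
        · simp [hx]
    _ = (∑ x, (if f x = a then μX x else 0) / pushMass f μX a) *
          (∑ y, (if g y = b then μY y else 0) / pushMass g μY b) * ν a b := by
        simp_rw [sum_mul_sum, sum_mul]
    _ = pushMass f μX a / pushMass f μX a * (pushMass g μY b / pushMass g μY b) * ν a b := by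
        rw [← sum_div, ← sum_div]
        rfl
    _ = ν a b / pushMass f μX a * pushMass f μX a / pushMass g μY b * pushMass g μY b := by ring
    _ = ν a b := by rw [hν.div_left_mul, hν.div_right_mul]

end Pullback

theorem blockMass_eq_pushMass {X : Type*} [Fintype X] (μ : X → ℝ) {m : ℕ}
    (P : PointedPartition X m) : blockMass μ P = pushMass P.part μ :=
  rfl

theorem qEcc_eq_weightedL2Norm {X : Type*} [Fintype X] {μ : X → ℝ} (hμ : ∀ x, 0 ≤ μ x)
    (d : X → X → ℝ) {m : ℕ} (P : PointedPartition X m) :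
    qEcc d μ P = weightedL2Norm μ (fun x => d (P.rep (P.part x)) x) := by
  unfold qEcc weightedL2Norm
  congr 1
  calc ∑ p, blockMass μ P p * ∑ x, d (P.rep p) x ^ 2 * blockMeasure μ P p x
      = ∑ p, ∑ x, if P.part x = p then μ x * d (P.rep (P.part x)) x ^ 2 else 0 := by
        refine sum_congr rfl fun p _ => ?_
        rw [mul_sum]
        refine sum_congr rfl fun x _ => ?_
        unfold blockMeasure
        split_ifs with hx
        · subst hx
          rw [blockMass_eq_pushMass]
          linear_combination d (P.rep (P.part x)) x ^ 2 * div_pushMass_mul_pushMass hμ P.part x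
        · simp
    _ = ∑ x, μ x * d (P.rep (P.part x)) x ^ 2 := by
        rw [sum_comm]
        simp

theorem dGW_le_dGW_add {X Y X' Y' : Type*} [Fintype X] [Fintype Y] [Fintype X'] [Fintype Y']
    {dX : X → X → ℝ} {dY : Y → Y → ℝ} {μX : X → ℝ} {μY : Y → ℝ}
    {dX' : X' → X' → ℝ} {dY' : Y' → Y' → ℝ} {μX' : X' → ℝ} {μY' : Y' → ℝ} {c : ℝ}
    (hne : ∃ μ, IsCoupling μX μY μ)
    (h : ∀ μ, IsCoupling μX μY μ →
      ∃ ν, IsCoupling μX' μY' ν ∧ √(GWLoss dX' dY' ν) ≤ √(GWLoss dX dY μ) + c) :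
    dGW dX' dY' μX' μY' ≤ dGW dX dY μX μY + c := by
  have hbdd : BddBelow {r : ℝ | ∃ ν, IsCoupling μX' μY' ν ∧ r = √(GWLoss dX' dY' ν)} :=
    ⟨0, by rintro _ ⟨ν, -, rfl⟩; positivity⟩
  obtain ⟨μ₀, hμ₀⟩ := hne
  rw [← sub_le_iff_le_add]
  refine le_csInf ⟨_, μ₀, hμ₀, rfl⟩ ?_
  rintro _ ⟨μ, hμ, rfl⟩
  obtain ⟨ν, hν, hle⟩ := h μ hμ
  rw [sub_le_iff_le_add]
  exact (csInf_le hbdd ⟨ν, hν, rfl⟩).trans hle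

theorem abs_sqrt_GWLoss_sub_sqrt_GWLoss_pushCoupling_le {X Y : Type*} [Fintype X] [Fintype Y]
    [PseudoMetricSpace X] [PseudoMetricSpace Y] {μX : X → ℝ} {μY : Y → ℝ} {μ : X → Y → ℝ}
    (hμ : IsCoupling μX μY μ) (hμX : ∑ x, μX x = 1) {m : ℕ}
    (PX : PointedPartition X m) (PY : PointedPartition Y m) :
    |√(GWLoss (fun x x' => dist x x') (fun y y' => dist y y') μ) -
        √(GWLoss (fun p q => dist (PX.rep p) (PX.rep q)) (fun p q => dist (PY.rep p) (PY.rep q))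
          (pushCoupling PX.part PY.part μ))| ≤
      2 * (qEcc (fun x x' => dist x x') μX PX + qEcc (fun y y' => dist y y') μY PY) := by
  rw [GWLoss_pushCoupling, qEcc_eq_weightedL2Norm hμ.left_nonneg,
    qEcc_eq_weightedL2Norm hμ.right_nonneg]
  exact abs_sqrt_GWLoss_sub_sqrt_GWLoss_comp_le hμ hμX (fun x => PX.rep (PX.part x))
    (fun y => PY.rep (PY.part y))

/-- `|d_GW(X,Y) − d_GW(Xᵐ,Yᵐ)| ≤ 2 (q(P_X) + q(P_Y))`. -/
theorem abs_dGW_diff_le_two_qEcc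
    {X Y : Type*} [Fintype X] [Fintype Y] [MetricSpace X] [MetricSpace Y] {m : ℕ}
    (μX : X → ℝ) (μY : Y → ℝ) (hμX : IsProb μX) (hμY : IsProb μY)
    (PX : PointedPartition X m) (PY : PointedPartition Y m) :
    |dGW (fun x x' => dist x x') (fun y y' => dist y y') μX μY -
        dGW (fun p q => dist (PX.rep p) (PX.rep q))
          (fun p q => dist (PY.rep p) (PY.rep q))
          (blockMass μX PX) (blockMass μY PY)| ≤
      2 * (qEcc (fun x x' => dist x x') μX PX + qEcc (fun y y' => dist y y') μY PY) := by
  have hcore := fun μ (hμ : IsCoupling μX μY μ) =>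
    abs_le.mp (abs_sqrt_GWLoss_sub_sqrt_GWLoss_pushCoupling_le hμ hμX.2 PX PY)
  rw [blockMass_eq_pushMass, blockMass_eq_pushMass, abs_sub_le_iff, sub_le_iff_le_add',
    sub_le_iff_le_add']
  constructor
  · refine dGW_le_dGW_add ⟨_, (isCoupling_mul_s13 hμX hμY).pushCoupling PX.part PY.part⟩
      fun ν hν => ⟨_, hν.pullCoupling hμX.1 hμY.1, ?_⟩
    have := hcore _ (hν.pullCoupling hμX.1 hμY.1)
    rw [pushCoupling_pullCoupling hν] at this
    linarith
  · exact dGW_le_dGW_add ⟨_, isCoupling_mul_s13 hμX hμY⟩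
      fun μ hμ => ⟨_, hμ.pushCoupling PX.part PY.part, by linarith [hcore μ hμ]⟩
end

section
/- Let X and Y be finite metric measure spaces with m-pointed partitions P_X and P_Y whose partition blocks all have metric diameter at most ε > 0. For any coupling μ ∈ C(μ_X, μ_Y), let GW(μ) = Σ J(x,y,x',y')² μ(x,y)μ(x',y') and GW*(μ) = Σ J*(x,y,x',y')² μ(x,y)μ(x',y'), where J(x,y,x',y') = d_X(x,x') − d_Y(y,y') and, for x ∈ Uᵖ, x' ∈ U^{p'}, y ∈ V^q, y' ∈ V^{q'}, J*(x,y,x',y') = d_X(x,xᵖ) + d_X(xᵖ,x^{p'}) + d_X(x^{p'},x') − d_Y(y,y^q) − d_Y(y^q,y^{q'}) − d_Y(y^{q'},y'). Then |GW(μ)^{1/2} − GW*(μ)^{1/2}| ≤ 6ε. -/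
/-!
`GW(μ)` and `GW*(μ)` are the squares of the weighted L² norms of `J` and `J*` with respect to
the probability weight `μ ⊗ μ`, so by Minkowski's inequality their square roots differ by at most
`sup |J - J*|`. Routing `d_X(x,x')` through the representatives `xᵖ, x^{p'}` overestimates it by
at most `2 (d_X(x,xᵖ) + d_X(x^{p'},x')) ≤ 4ε`, and likewise on `Y`, so `|J - J*| ≤ 4ε ≤ 6ε`.
-/

open Finset

/-- `J*(x,y,x',y')`: the approximation of `d_X(x,x') − d_Y(y,y')` obtained by routing
through the representatives of the blocks containing the points. -/
noncomputable def Jstar {X Y : Type*} [MetricSpace X] [MetricSpace Y] {m : ℕ}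
    (PX : PointedPartition X m) (PY : PointedPartition Y m)
    (x : X) (y : Y) (x' : X) (y' : Y) : ℝ :=
  dist x (PX.rep (PX.part x)) + dist (PX.rep (PX.part x)) (PX.rep (PX.part x')) +
      dist (PX.rep (PX.part x')) x' -
    dist y (PY.rep (PY.part y)) - dist (PY.rep (PY.part y)) (PY.rep (PY.part y')) -
      dist (PY.rep (PY.part y')) y'

/-- The loss `GW*(μ) = Σ J*(x,y,x',y')² μ(x,y) μ(x',y')`. -/
noncomputable def GWStarLoss {X Y : Type*} [Fintype X] [Fintype Y]
    [MetricSpace X] [MetricSpace Y] {m : ℕ}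
    (PX : PointedPartition X m) (PY : PointedPartition Y m) (μ : X → Y → ℝ) : ℝ :=
  ∑ x, ∑ y, ∑ x', ∑ y', Jstar PX PY x y x' y' ^ 2 * μ x y * μ x' y'

section WeightedL2

variable {ι : Type*} [Fintype ι] {w : ι → ℝ}

lemma abs_sqrt_sum_sq_mul_sub_sqrt_sum_sq_mul_le (hw : ∀ i, 0 ≤ w i) (a b : ι → ℝ) :
    |√(∑ i, a i ^ 2 * w i) - √(∑ i, b i ^ 2 * w i)| ≤ √(∑ i, (a i - b i) ^ 2 * w i) := by
  let F : (ι → ℝ) → EuclideanSpace ℝ ι := fun f => WithLp.toLp 2 fun i => f i * √(w i)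
  have hF : ∀ f, ‖F f‖ = √(∑ i, f i ^ 2 * w i) := fun f => by
    simp [F, EuclideanSpace.norm_eq, mul_pow, Real.sq_sqrt (hw _)]
  have hFsub : F a - F b = F fun i => a i - b i := by
    ext i
    simp [F, sub_mul]
  simpa only [hF, hFsub] using abs_norm_sub_norm_le (F a) (F b)

lemma sqrt_sum_sq_mul_le (hw : ∀ i, 0 ≤ w i) (hw₁ : ∑ i, w i ≤ 1) {a : ι → ℝ} {c : ℝ}
    (hc : 0 ≤ c) (ha : ∀ i, |a i| ≤ c) : √(∑ i, a i ^ 2 * w i) ≤ c := by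
  rw [Real.sqrt_le_left hc]
  calc ∑ i, a i ^ 2 * w i ≤ ∑ i, c ^ 2 * w i := by
        refine sum_le_sum fun i _ => mul_le_mul_of_nonneg_right ?_ (hw i)
        exact sq_le_sq' (abs_le.mp (ha i)).1 (abs_le.mp (ha i)).2
    _ = c ^ 2 * ∑ i, w i := by rw [mul_sum]
    _ ≤ c ^ 2 := mul_le_of_le_one_right (sq_nonneg c) hw₁

lemma abs_sqrt_sum_sq_mul_sub_sqrt_sum_sq_mul_le_of_abs_sub_le (hw : ∀ i, 0 ≤ w i)
    (hw₁ : ∑ i, w i ≤ 1) {a b : ι → ℝ} {c : ℝ} (hc : 0 ≤ c) (hab : ∀ i, |a i - b i| ≤ c) :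
    |√(∑ i, a i ^ 2 * w i) - √(∑ i, b i ^ 2 * w i)| ≤ c :=
  (abs_sqrt_sum_sq_mul_sub_sqrt_sum_sq_mul_le hw a b).trans (sqrt_sum_sq_mul_le hw hw₁ hc hab)

end WeightedL2

lemma dist_add_dist_add_dist_le {α : Type*} [PseudoMetricSpace α] (x u u' x' : α) :
    dist x u + dist u u' + dist u' x' ≤ dist x x' + 2 * (dist x u + dist u' x') := by
  have h := dist_triangle4 u x x' u'
  rw [dist_comm u x, dist_comm x' u'] at h
  linarith

lemma PointedPartition.dist_rep_part_le {X : Type*} [PseudoMetricSpace X] {m : ℕ}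
    (P : PointedPartition X m) {ε : ℝ} (hdiam : ∀ x x' : X, P.part x = P.part x' → dist x x' ≤ ε)
    (x : X) : dist x (P.rep (P.part x)) ≤ ε :=
  hdiam _ _ (P.part_rep _).symm

lemma abs_dist_sub_dist_sub_Jstar_le {X Y : Type*} [MetricSpace X] [MetricSpace Y] {m : ℕ}
    {PX : PointedPartition X m} {PY : PointedPartition Y m} {ε : ℝ}
    (hdiamX : ∀ x x' : X, PX.part x = PX.part x' → dist x x' ≤ ε)
    (hdiamY : ∀ y y' : Y, PY.part y = PY.part y' → dist y y' ≤ ε) (x : X) (y : Y) (x' : X)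
    (y' : Y) : |dist x x' - dist y y' - Jstar PX PY x y x' y'| ≤ 4 * ε := by
  have hx := PX.dist_rep_part_le hdiamX x
  have hx' := PX.dist_rep_part_le hdiamX x'
  have hy := PY.dist_rep_part_le hdiamY y
  have hy' := PY.dist_rep_part_le hdiamY y'
  rw [dist_comm x'] at hx'
  rw [dist_comm y'] at hy'
  have hXlo := dist_triangle4 x (PX.rep (PX.part x)) (PX.rep (PX.part x')) x'
  have hYlo := dist_triangle4 y (PY.rep (PY.part y)) (PY.rep (PY.part y')) y'
  have hXhi := dist_add_dist_add_dist_le x (PX.rep (PX.part x)) (PX.rep (PX.part x')) x'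
  have hYhi := dist_add_dist_add_dist_le y (PY.rep (PY.part y)) (PY.rep (PY.part y')) y'
  rw [Jstar, abs_le]
  constructor <;> linarith

section Coupling

variable {X Y : Type*} [Fintype X] [Fintype Y] {μ : X → Y → ℝ}

lemma sum_sum_sum_sum_mul_mul_eq_sum_prod (f : X → Y → X → Y → ℝ) :
    ∑ x, ∑ y, ∑ x', ∑ y', f x y x' y' * μ x y * μ x' y' =
      ∑ i : (X × Y) × (X × Y), f i.1.1 i.1.2 i.2.1 i.2.2 * (μ i.1.1 i.1.2 * μ i.2.1 i.2.2) := by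
  simp only [Fintype.sum_prod_type, mul_assoc]

lemma IsCoupling.sum_prod_mul_eq_one {μX : X → ℝ} {μY : Y → ℝ} (hμ : IsCoupling μX μY μ)
    (hμX : ∑ x, μX x = 1) : ∑ i : (X × Y) × (X × Y), μ i.1.1 i.1.2 * μ i.2.1 i.2.2 = 1 := by
  have hmass : ∑ p : X × Y, μ p.1 p.2 = 1 := by
    rw [Fintype.sum_prod_type, ← hμX]
    exact sum_congr rfl fun x _ => hμ.2.1 x
  calc _ = (∑ p : X × Y, μ p.1 p.2) * ∑ p : X × Y, μ p.1 p.2 := by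
        rw [Fintype.sum_mul_sum, Fintype.sum_prod_type]
    _ = 1 := by rw [hmass, one_mul]

end Coupling

theorem abs_sqrt_GWLoss_sub_sqrt_GWStarLoss_le_general
    {X Y : Type*} [Fintype X] [Fintype Y] [MetricSpace X] [MetricSpace Y] {m : ℕ}
    (μX : X → ℝ) (μY : Y → ℝ) (hμX : IsProb μX)
    (PX : PointedPartition X m) (PY : PointedPartition Y m)
    (ε : ℝ) (hε : 0 < ε)
    (hdiamX : ∀ x x' : X, PX.part x = PX.part x' → dist x x' ≤ ε)
    (hdiamY : ∀ y y' : Y, PY.part y = PY.part y' → dist y y' ≤ ε)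
    (μ : X → Y → ℝ) (hμ : IsCoupling μX μY μ) :
    |Real.sqrt (GWLoss (fun x x' => dist x x') (fun y y' => dist y y') μ) -
        Real.sqrt (GWStarLoss PX PY μ)| ≤ 6 * ε := by
  rw [GWLoss, GWStarLoss, sum_sum_sum_sum_mul_mul_eq_sum_prod,
    sum_sum_sum_sum_mul_mul_eq_sum_prod]
  refine abs_sqrt_sum_sq_mul_sub_sqrt_sum_sq_mul_le_of_abs_sub_le
    (fun i => mul_nonneg (hμ.1 _ _) (hμ.1 _ _)) (hμ.sum_prod_mul_eq_one hμX.2).le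
    (by positivity) fun i => ?_
  exact (abs_dist_sub_dist_sub_Jstar_le hdiamX hdiamY _ _ _ _).trans (by linarith)

/-- `|GW(μ)^{1/2} − GW*(μ)^{1/2}| ≤ 6ε` for any coupling `μ`, when all
partition blocks have diameter at most `ε`. -/
theorem abs_sqrt_GWLoss_sub_sqrt_GWStarLoss_le
    {X Y : Type*} [Fintype X] [Fintype Y] [MetricSpace X] [MetricSpace Y] {m : ℕ}
    (μX : X → ℝ) (μY : Y → ℝ) (hμX : IsProb μX) (hμY : IsProb μY)
    (PX : PointedPartition X m) (PY : PointedPartition Y m)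
    (ε : ℝ) (hε : 0 < ε)
    (hdiamX : ∀ x x' : X, PX.part x = PX.part x' → dist x x' ≤ ε)
    (hdiamY : ∀ y y' : Y, PY.part y = PY.part y' → dist y y' ≤ ε)
    (μ : X → Y → ℝ) (hμ : IsCoupling μX μY μ) :
    |Real.sqrt (GWLoss (fun x x' => dist x x') (fun y y' => dist y y') μ) -
        Real.sqrt (GWStarLoss PX PY μ)| ≤ 6 * ε :=
  abs_sqrt_GWLoss_sub_sqrt_GWStarLoss_le_general μX μY hμX PX PY ε hε hdiamX hdiamY μ hμ
end
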